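/- Let ψ₁, ψ₂ be an orthonormal basis of ℂ², Φ = ψ₁⊗ψ₁ + ψ₂⊗ψ₂, and ρ₁ = (1/4)|Φ⟩⟨Φ| + (1/4)(|ψ₁⟩⟨ψ₁| + |ψ₂⟩⟨ψ₂|) ⊗ |ψ₁⟩⟨ψ₁| on ℂ²⊗ℂ². Then with χ = ψ₁⊗ψ₁⊗ψ₁ + ψ₂⊗ψ₁⊗ψ₂, the matrix R = (1/4)|Φ⟩⟨Φ| ⊗ |ψ₁⟩⟨ψ₁| + (1/4)|χ⟩⟨χ| on ℂ²⊗ℂ²⊗ℂ² is positive semidefinite and its partial traces over the second and over the third tensor factor both equal ρ₁; consequently ρ₁ is a DSO state. -/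

import Mathlib

/-!
`R = ¼ (|Φ ⊗ ψ₁⟩⟨Φ ⊗ ψ₁| + |χ⟩⟨χ|)` is a sum of rank-one positive operators. Tracing out the
third factor, orthonormality of `ψ₁, ψ₂` kills the cross terms of `|χ⟩⟨χ|` and leaves `ρ₁`.
Exchanging the second and third factors maps `Φ ⊗ ψ₁` to `χ` and back, so `R` is invariant under
the exchange and its partial trace over the second factor equals the one over the third.
Positivity of `ρ₁` is inherited from `R`: a partial trace is a sum of compressions.
-/

open Matrix
open scoped Kronecker ComplexOrder

namespace BellPaper

variable {α β γ : Type*} [Fintype α] [Fintype β] [Fintype γ]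

/-- Partial trace over the first factor of a threefold tensor product. -/
noncomputable def ptr1 (T : Matrix ((α × β) × γ) ((α × β) × γ) ℂ) :
    Matrix (β × γ) (β × γ) ℂ :=
  fun p q => ∑ i : α, T ((i, p.1), p.2) ((i, q.1), q.2)

/-- Partial trace over the second factor of a threefold tensor product. -/
noncomputable def ptr2 (T : Matrix ((α × β) × γ) ((α × β) × γ) ℂ) :
    Matrix (α × γ) (α × γ) ℂ :=
  fun p q => ∑ j : β, T ((p.1, j), p.2) ((q.1, j), q.2)

/-- Partial trace over the third factor of a threefold tensor product. -/
noncomputable def ptr3 (T : Matrix ((α × β) × γ) ((α × β) × γ) ℂ) :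
    Matrix (α × β) (α × β) ℂ :=
  fun p q => ∑ k : γ, T (p, k) (q, k)

/-- Partial trace over the second factor of a twofold tensor product. -/
noncomputable def ptrB (M : Matrix (α × β) (α × β) ℂ) : Matrix α α ℂ :=
  fun i i' => ∑ j : β, M (i, j) (i', j)

/-- A density matrix: positive semidefinite with unit trace. -/
def IsDensityMatrix {n : Type*} [Fintype n] (ρ : Matrix n n ℂ) : Prop :=
  ρ.PosSemidef ∧ ρ.trace = 1

/-- Source-operator of type `T₁₂₂` for a state on ℂ^{d₁}⊗ℂ^{d₂}. -/
def IsSource122 {d₁ d₂ : ℕ} (ρ : Matrix (Fin d₁ × Fin d₂) (Fin d₁ × Fin d₂) ℂ)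
    (T : Matrix ((Fin d₁ × Fin d₂) × Fin d₂) ((Fin d₁ × Fin d₂) × Fin d₂) ℂ) : Prop :=
  T.IsHermitian ∧ ptr2 T = ρ ∧ ptr3 T = ρ

/-- Source-operator of type `T₁₁₂` for a state on ℂ^{d₁}⊗ℂ^{d₂}. -/
def IsSource112 {d₁ d₂ : ℕ} (ρ : Matrix (Fin d₁ × Fin d₂) (Fin d₁ × Fin d₂) ℂ)
    (S : Matrix ((Fin d₁ × Fin d₁) × Fin d₂) ((Fin d₁ × Fin d₁) × Fin d₂) ℂ) : Prop :=
  S.IsHermitian ∧ ptr1 S = ρ ∧ ptr2 S = ρ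

/-- A DSO state: a density matrix admitting a positive semidefinite source-operator. -/
def IsDSO {d₁ d₂ : ℕ} (ρ : Matrix (Fin d₁ × Fin d₂) (Fin d₁ × Fin d₂) ℂ) : Prop :=
  IsDensityMatrix ρ ∧
    ((∃ T, T.PosSemidef ∧ IsSource122 ρ T) ∨ (∃ S, S.PosSemidef ∧ IsSource112 ρ S))

/-- A Bell class state: a density matrix admitting a density source-operator with the
special dilation property (all three partial traces equal the state). -/
def IsBellClass {d : ℕ} (ρ : Matrix (Fin d × Fin d) (Fin d × Fin d) ℂ) : Prop :=
  IsDensityMatrix ρ ∧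
    ∃ T : Matrix ((Fin d × Fin d) × Fin d) ((Fin d × Fin d) × Fin d) ℂ,
      T.PosSemidef ∧ ptr1 T = ρ ∧ ptr2 T = ρ ∧ ptr3 T = ρ

/-- The operator (spectral) norm of a matrix acting on a Euclidean space. -/
noncomputable def opNorm {n : Type*} [Fintype n] [DecidableEq n] (W : Matrix n n ℂ) : ℝ :=
  ‖Matrix.toEuclideanCLM (𝕜 := ℂ) W‖

/-- The swap (permutation) operator `V_d` on ℂ^d ⊗ ℂ^d. -/
noncomputable def swapMat (d : ℕ) : Matrix (Fin d × Fin d) (Fin d × Fin d) ℂ :=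
  fun p q => if p.1 = q.2 ∧ p.2 = q.1 then 1 else 0

/-- The Werner state on ℂ^d ⊗ ℂ^d. -/
noncomputable def werner (d : ℕ) : Matrix (Fin d × Fin d) (Fin d × Fin d) ℂ :=
  (((d : ℂ) + 1) / (d : ℂ) ^ 3) • (1 : Matrix (Fin d × Fin d) (Fin d × Fin d) ℂ)
    - ((d : ℂ) ^ 2)⁻¹ • swapMat d

/-- The triple of indices of a point of the threefold product. -/
def triple {d : ℕ} (p : (Fin d × Fin d) × Fin d) : Fin 3 → Fin d := ![p.1.1, p.1.2, p.2]

/-- The unitary permuting the three tensor factors of ℂ^d ⊗ ℂ^d ⊗ ℂ^d according to π. -/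
noncomputable def permMat (d : ℕ) (π : Equiv.Perm (Fin 3)) :
    Matrix ((Fin d × Fin d) × Fin d) ((Fin d × Fin d) × Fin d) ℂ :=
  fun p q => if ∀ i, triple p (π i) = triple q i then 1 else 0

/-- The antisymmetrization projection `Q_d^{(-)}` on ℂ^d ⊗ ℂ^d ⊗ ℂ^d. -/
noncomputable def antisym (d : ℕ) :
    Matrix ((Fin d × Fin d) × Fin d) ((Fin d × Fin d) × Fin d) ℂ :=
  (6 : ℂ)⁻¹ • ∑ π : Equiv.Perm (Fin 3), (((Equiv.Perm.sign π : ℤ) : ℂ)) • permMat d π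

/-- Tensor product of two vectors. -/
def tens {m n : Type*} (u : m → ℂ) (v : n → ℂ) : m × n → ℂ := fun p => u p.1 * v p.2

/-- The rank-one operator |v⟩⟨v|. -/
noncomputable def outer {n : Type*} (v : n → ℂ) : Matrix n n ℂ :=
  Matrix.vecMulVec v (star v)

variable {l m n : Type*}

lemma outer_posSemidef [Fintype n] (v : n → ℂ) : (outer v).PosSemidef :=
  posSemidef_vecMulVec_self_star v

lemma trace_outer [Fintype n] (v : n → ℂ) : (outer v).trace = star v ⬝ᵥ v := by
  rw [outer, trace_vecMulVec, dotProduct_comm]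

lemma outer_kronecker_outer (u : m → ℂ) (v : n → ℂ) :
    outer u ⊗ₖ outer v = outer (tens u v) := by
  ext p q
  simp only [outer, tens, kroneckerMap_apply, vecMulVec_apply, Pi.star_apply, star_mul']
  ring

lemma outer_submatrix (v : n → ℂ) (f : m → n) :
    (outer v).submatrix f f = outer (v ∘ f) :=
  rfl

lemma star_dotProduct_eq_zero_comm [Fintype n] {v w : n → ℂ} (h : star v ⬝ᵥ w = 0) :
    star w ⬝ᵥ v = 0 := by
  rw [← star_star (star w ⬝ᵥ v), star_dotProduct, star_star, h, star_zero]

lemma add_tens (u u' : m → ℂ) (v : n → ℂ) : tens (u + u') v = tens u v + tens u' v := by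
  funext p
  exact add_mul _ _ _

lemma star_tens_dotProduct_tens [Fintype m] [Fintype n] (a b : m → ℂ) (c d : n → ℂ) :
    star (tens a c) ⬝ᵥ tens b d = (star a ⬝ᵥ b) * (star c ⬝ᵥ d) := by
  simp only [dotProduct, Pi.star_apply, tens, star_mul', Fintype.sum_prod_type,
    Finset.sum_mul_sum]
  refine Finset.sum_congr rfl fun i _ => Finset.sum_congr rfl fun j _ => ?_
  ring

lemma ptr3_add [Fintype n] (A B : Matrix ((l × m) × n) ((l × m) × n) ℂ) :
    ptr3 (A + B) = ptr3 A + ptr3 B := by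
  ext p q
  simp only [ptr3, Matrix.add_apply, Finset.sum_add_distrib]

lemma ptr3_smul [Fintype n] (c : ℂ) (A : Matrix ((l × m) × n) ((l × m) × n) ℂ) :
    ptr3 (c • A) = c • ptr3 A := by
  ext p q
  simp only [ptr3, Matrix.smul_apply, smul_eq_mul, Finset.mul_sum]

lemma ptr3_vecMulVec_tens [Fintype n] (x y : l × m → ℂ) (v w : n → ℂ) :
    ptr3 (vecMulVec (tens x v) (star (tens y w))) = (star w ⬝ᵥ v) • vecMulVec x (star y) := by
  ext p q
  simp only [ptr3, tens, dotProduct, vecMulVec_apply, Pi.star_apply, star_mul',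
    Matrix.smul_apply, smul_eq_mul, Finset.sum_mul]
  refine Finset.sum_congr rfl fun k _ => ?_
  ring

lemma ptr3_outer_tens [Fintype n] {v : n → ℂ} (hv : star v ⬝ᵥ v = 1) (x : l × m → ℂ) :
    ptr3 (outer (tens x v)) = outer x := by
  rw [outer, ptr3_vecMulVec_tens, hv, one_smul, outer]

lemma ptr3_outer_tens_add_tens [Fintype n] {v w : n → ℂ} (hv : star v ⬝ᵥ v = 1)
    (hw : star w ⬝ᵥ w = 1) (hvw : star v ⬝ᵥ w = 0) (x y : l × m → ℂ) :
    ptr3 (outer (tens x v + tens y w)) = outer x + outer y := by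
  simp only [outer, star_add, vecMulVec_add, add_vecMulVec, ptr3_add, ptr3_vecMulVec_tens,
    hv, hw, hvw, star_dotProduct_eq_zero_comm hvw, one_smul, zero_smul, add_zero, zero_add]

lemma ptr3_eq_sum_submatrix [Fintype n] (T : Matrix ((l × m) × n) ((l × m) × n) ℂ) :
    ptr3 T = ∑ k, T.submatrix (·, k) (·, k) := by
  ext p q
  simp only [ptr3, Matrix.sum_apply, submatrix_apply]

lemma posSemidef_ptr3 [Fintype n] {T : Matrix ((l × m) × n) ((l × m) × n) ℂ}
    (hT : T.PosSemidef) : (ptr3 T).PosSemidef := by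
  rw [ptr3_eq_sum_submatrix]
  exact posSemidef_sum _ fun k _ => hT.submatrix _

def swap23 (p : (l × m) × m) : (l × m) × m := ((p.1.1, p.2), p.1.2)

lemma ptr2_eq_ptr3_submatrix_swap23 [Fintype m] (T : Matrix ((l × m) × m) ((l × m) × m) ℂ) :
    ptr2 T = ptr3 (T.submatrix swap23 swap23) :=
  rfl

lemma tens_tens_comp_swap23 (a : l → ℂ) (b c : m → ℂ) :
    tens (tens a b) c ∘ swap23 = tens (tens a c) b := by
  funext p
  simp only [Function.comp_apply, tens, swap23]
  ring

/-- the state ρ₁ of (15) admits the density source-operator (17) of type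
`T₁₂₂`, hence ρ₁ is a DSO state. -/
theorem rho_one_isDSO (ψ₁ ψ₂ : Fin 2 → ℂ)
    (h11 : star ψ₁ ⬝ᵥ ψ₁ = 1) (h22 : star ψ₂ ⬝ᵥ ψ₂ = 1) (h12 : star ψ₁ ⬝ᵥ ψ₂ = 0)
    (Φ : Fin 2 × Fin 2 → ℂ) (hΦ : Φ = tens ψ₁ ψ₁ + tens ψ₂ ψ₂)
    (ρ₁ : Matrix (Fin 2 × Fin 2) (Fin 2 × Fin 2) ℂ)
    (hρ₁ : ρ₁ = (4 : ℂ)⁻¹ • outer Φ + (4 : ℂ)⁻¹ • ((outer ψ₁ + outer ψ₂) ⊗ₖ outer ψ₁))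
    (χ : (Fin 2 × Fin 2) × Fin 2 → ℂ) (hχ : χ = tens (tens ψ₁ ψ₁) ψ₁ + tens (tens ψ₂ ψ₁) ψ₂)
    (R : Matrix ((Fin 2 × Fin 2) × Fin 2) ((Fin 2 × Fin 2) × Fin 2) ℂ)
    (hRdef : R = (4 : ℂ)⁻¹ • (outer Φ ⊗ₖ outer ψ₁) + (4 : ℂ)⁻¹ • outer χ) :
    R.PosSemidef ∧ ptr2 R = ρ₁ ∧ ptr3 R = ρ₁ ∧ IsDSO ρ₁ := by
  have hquarter : (0 : ℂ) ≤ 4⁻¹ := by positivity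
  rw [outer_kronecker_outer] at hRdef
  have hR : R.PosSemidef := hRdef ▸
    ((outer_posSemidef _).smul hquarter).add ((outer_posSemidef _).smul hquarter)
  have hptr3 : ptr3 R = ρ₁ := by
    rw [hRdef, hρ₁, hχ, ptr3_add, ptr3_smul, ptr3_smul, ptr3_outer_tens h11,
      ptr3_outer_tens_add_tens h11 h22 h12, add_kronecker, outer_kronecker_outer,
      outer_kronecker_outer]
  have hswap : R.submatrix swap23 swap23 = R := by
    simp only [hRdef, submatrix_add, submatrix_smul, Pi.add_apply, Pi.smul_apply,
      outer_submatrix, hΦ, hχ, add_tens, Pi.add_comp, tens_tens_comp_swap23]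
    exact add_comm _ _
  have hptr2 : ptr2 R = ρ₁ := by rw [ptr2_eq_ptr3_submatrix_swap23, hswap, hptr3]
  have hΦΦ : star Φ ⬝ᵥ Φ = 2 := by
    simp only [hΦ, star_add, add_dotProduct, dotProduct_add, star_tens_dotProduct_tens,
      h11, h22, h12, star_dotProduct_eq_zero_comm h12]
    norm_num
  have htrace : ρ₁.trace = 1 := by
    simp only [hρ₁, trace_add, trace_smul, trace_kronecker, trace_outer, hΦΦ, h11, h22,
      smul_eq_mul]
    norm_num
  exact ⟨hR, hptr2, hptr3, ⟨hptr3 ▸ posSemidef_ptr3 hR, htrace⟩,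
    Or.inl ⟨R, hR, hR.isHermitian, hptr2, hptr3⟩⟩

end BellPaper
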